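/- arXiv:0904.2503 — 11 statements merged into one kernel-verified Lean document; each statement's English description precedes it below -/
import Mathlib

section
/- If G is a finite p-nilpotent group and P a Sylow p-subgroup of G, then P controls p-fusion in G: for any subgroup A ≤ P and g ∈ G with A^g ≤ P, there exists x ∈ P such that a^g = a^x for all a ∈ A. -/
/-!
Write `G = N P` with `N` the normal `p`-complement, so `g = n x` with `n ∈ N`, `x ∈ P`.
Since `N ∩ P = 1`, an element `n ∈ N` that conjugates `a ∈ P` into `P` centralizes `a`:
the commutator `a⁻¹ (n⁻¹ a n)` lies in both `N` and `P`. Hence conjugation by `g` agrees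
with conjugation by `x` on every `a ∈ P` that `g` conjugates into `P`.
-/

open scoped Pointwise

namespace Subgroup

variable {G : Type*} [Group G]

theorem disjoint_of_coprime_natCard_of_isPGroup {p : ℕ} {N Q : Subgroup G} (hQ : IsPGroup p Q)
    (hN : (Nat.card N).Coprime p) : Disjoint N Q := by
  rw [disjoint_def]
  intro y hyN hyQ
  obtain ⟨k, hk⟩ := hQ ⟨y, hyQ⟩
  have hyk : y ^ p ^ k = 1 := by simpa using congrArg Subtype.val hk
  have hycard : y ^ Nat.card N = 1 :=
    congrArg Subtype.val (pow_card_eq_one' (x := (⟨y, hyN⟩ : N)))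
  simpa [hN.pow_right k] using pow_gcd_eq_one.mpr ⟨hycard, hyk⟩

theorem conj_eq_self_of_disjoint {N H : Subgroup G} [N.Normal] (hNH : Disjoint N H) {a n : G}
    (ha : a ∈ H) (hn : n ∈ N) (hconj : n⁻¹ * a * n ∈ H) : n⁻¹ * a * n = a := by
  have hcommN : a⁻¹ * (n⁻¹ * a * n) ∈ N := by
    have : a⁻¹ * n⁻¹ * a ∈ N := by
      simpa [mul_assoc] using Normal.conj_mem ‹_› n⁻¹ (N.inv_mem hn) a⁻¹
    simpa [mul_assoc] using N.mul_mem this hn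
  have hcommH : a⁻¹ * (n⁻¹ * a * n) ∈ H := H.mul_mem (H.inv_mem ha) hconj
  exact (inv_mul_eq_one.mp (disjoint_def.mp hNH hcommN hcommH)).symm

theorem exists_conj_eq_of_disjoint_of_sup_eq_top {N H : Subgroup G} [N.Normal]
    (hNH : Disjoint N H) (hsup : N ⊔ H = ⊤) (g : G) :
    ∃ x ∈ H, ∀ a ∈ H, g⁻¹ * a * g ∈ H → g⁻¹ * a * g = x⁻¹ * a * x := by
  obtain ⟨n, hn, x, hx, rfl⟩ : g ∈ (N : Set G) * (H : Set G) := by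
    rw [← normal_mul, hsup]
    trivial
  refine ⟨x, hx, fun a ha hconj => ?_⟩
  have hnconj : n⁻¹ * a * n ∈ H := by
    simpa [mul_assoc] using H.mul_mem (H.mul_mem hx hconj) (H.inv_mem hx)
  calc (n * x)⁻¹ * a * (n * x) = x⁻¹ * (n⁻¹ * a * n) * x := by group
    _ = x⁻¹ * a * x := by rw [conj_eq_self_of_disjoint hNH ha hn hnconj]

end Subgroup

theorem stmt_2_general {G : Type*} [Group G] (p : ℕ) (P : Sylow p G)
    (hnil : ∃ N : Subgroup G, N.Normal ∧ Nat.Coprime (Nat.card N) p ∧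
      N ⊔ (P : Subgroup G) = ⊤) :
    ∀ A : Subgroup G, A ≤ (P : Subgroup G) → ∀ g : G,
      (∀ a ∈ A, g⁻¹ * a * g ∈ (P : Subgroup G)) →
      ∃ x ∈ (P : Subgroup G), ∀ a ∈ A, g⁻¹ * a * g = x⁻¹ * a * x := by
  obtain ⟨N, hN, hcop, hsup⟩ := hnil
  intro A hA g hg
  obtain ⟨x, hx, hfusion⟩ := Subgroup.exists_conj_eq_of_disjoint_of_sup_eq_top
    (Subgroup.disjoint_of_coprime_natCard_of_isPGroup P.isPGroup' hcop) hsup g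
  exact ⟨x, hx, fun a ha => hfusion a (hA ha) (hg a ha)⟩

theorem stmt_2 {G : Type*} [Group G] [Finite G] (p : ℕ) (hp : p.Prime) (P : Sylow p G)
    (hnil : ∃ N : Subgroup G, N.Normal ∧ Nat.Coprime (Nat.card N) p ∧
      N ⊔ (P : Subgroup G) = ⊤) :
    ∀ A : Subgroup G, A ≤ (P : Subgroup G) → ∀ g : G,
      (∀ a ∈ A, g⁻¹ * a * g ∈ (P : Subgroup G)) →
      ∃ x ∈ (P : Subgroup G), ∀ a ∈ A, g⁻¹ * a * g = x⁻¹ * a * x :=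
  stmt_2_general p P hnil
end

section
/- Let G be a finite group, p a prime, and K = ⟨x ∈ G : x^q = 1⟩ with q = p (p odd) or q = 4 (p = 2). If K ≤ Z_n(G) for some n, then K is a finite p-group. -/
/-!
Since `K ≤ Z_n(G)`, the finite group `K` is nilpotent, so each of its Sylow subgroups is normal
and hence contains every `p`-element of `K`. The generators of `K` satisfy `x ^ p = 1`, resp.
`x ^ 4 = 1`, so they all lie in the Sylow `p`-subgroup of `K`, which is therefore all of `K`.
-/

namespace Subgroup

variable {G : Type*} [Group G]

theorem comap_subtype_upperCentralSeries_le (H : Subgroup G) (n : ℕ) :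
    (upperCentralSeries G n).comap H.subtype ≤ upperCentralSeries H n := by
  induction n with
  | zero => exact fun x hx => Subtype.ext hx
  | succ n ih =>
    intro x hx
    rw [mem_comap, mem_upperCentralSeries_succ_iff] at hx
    exact mem_upperCentralSeries_succ_iff.mpr fun y => ih (hx y)

theorem isNilpotent_of_le_upperCentralSeries {H : Subgroup G} {n : ℕ}
    (hH : H ≤ upperCentralSeries G n) : Group.IsNilpotent H :=
  ⟨n, eq_top_iff.mpr fun x _ => comap_subtype_upperCentralSeries_le H n (hH x.2)⟩

end Subgroup

section

open Subgroup

variable {G : Type*} [Group G] {p : ℕ} [Fact p.Prime]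

theorem Sylow.mem_of_pow_prime_pow_eq_one [Finite G] [Group.IsNilpotent G]
    (P : Sylow p G) {g : G} {k : ℕ} (hg : g ^ p ^ k = 1) : g ∈ P := by
  have hpg : IsPGroup p (zpowers g) :=
    IsPGroup.of_card_dvd_pow (by rw [Nat.card_zpowers]; exact orderOf_dvd_of_pow_eq_one hg)
  obtain ⟨Q, hQ⟩ := hpg.exists_le_sylow
  have := (Sylow.unique_of_normal P inferInstance).instSubsingleton
  exact Subsingleton.elim Q P ▸ hQ (mem_zpowers g)

theorem IsPGroup.closure_of_isNilpotent {S : Set G} [Finite (closure S)]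
    [Group.IsNilpotent (closure S)] (hS : ∀ g ∈ S, ∃ k, g ^ p ^ k = 1) :
    IsPGroup p (closure S) := by
  obtain ⟨P⟩ : Nonempty (Sylow p (closure S)) := inferInstance
  have hPtop : (P : Subgroup (closure S)) = ⊤ := by
    refine eq_top_iff.mpr (closure_closure_coe_preimage (k := S) ▸ (closure_le _).mpr ?_)
    intro x hx
    obtain ⟨k, hk⟩ := hS x hx
    exact P.mem_of_pow_prime_pow_eq_one (k := k) (Subtype.ext hk)
  exact (hPtop ▸ P.isPGroup').of_equiv topEquiv

end

theorem stmt_8 {G : Type*} [Group G] [Finite G] (p : ℕ) (hp : p.Prime) (n : ℕ)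
    (hK : Subgroup.closure {x : G | x ^ (if p = 2 then 4 else p) = 1} ≤ upperCentralSeries G n) :
    IsPGroup p (Subgroup.closure {x : G | x ^ (if p = 2 then 4 else p) = 1}) := by
  have := Fact.mk hp
  have := Subgroup.isNilpotent_of_le_upperCentralSeries hK
  have hq : (if p = 2 then 4 else p) = p ^ (if p = 2 then 2 else 1) := by
    split_ifs with h2 <;> simp [h2]
  exact IsPGroup.closure_of_isNilpotent fun g hg => ⟨_, hq ▸ hg⟩
end

section
/- Let G be a finite group, K a normal subgroup of G contained in Z_n(G) with exponent p^e. Then for every x ∈ G, x^{p^{e+n}} centralizes K; consequently G^{p^{e+n}} ≤ C_G(K). -/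
/-!
Give `a ^ p ^ r`, for `a ∈ K ⊓ Z_j(G)`, the weight `(n - j) + r`. Commutators with elements of
`G` and `p`-th powers both raise the weight by one. In place of the Hall–Petrescu formula it
suffices that `⁅u ^ q, k⁆ = ⁅u, k⁆ ^ q` whenever `u` commutes with `⁅u, k⁆`, applied modulo the
next term of the filtration; for `p`-th powers of elements of `Z_{n+1}` this needs the filtration
built from `Z_n`, whence an induction on `n`. Hence `⁅x ^ p ^ s, k⁆` has weight at least `s` for
`k ∈ K`, while everything of weight at least `n + e` is trivial because `a ^ p ^ e = 1` on `K`.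
-/

open scoped commutatorElement

section Commutators

open Subgroup

variable {G : Type*} [Group G]

theorem commutatorElement_pow_left_of_commute {u k : G} (h : Commute u ⁅u, k⁆) (q : ℕ) :
    ⁅u ^ q, k⁆ = ⁅u, k⁆ ^ q := by
  have hconj : ∀ q : ℕ, u ^ q * k * (u ^ q)⁻¹ = ⁅u, k⁆ ^ q * k := by
    intro q
    induction q with
    | zero => simp
    | succ q ih =>
      calc u ^ (q + 1) * k * (u ^ (q + 1))⁻¹ = u * (u ^ q * k * (u ^ q)⁻¹) * u⁻¹ := by group
        _ = ⁅u, k⁆ ^ q * (u * k * u⁻¹) := by rw [ih, ← mul_assoc, (h.pow_right q).eq]; group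
        _ = ⁅u, k⁆ ^ q * (⁅u, k⁆ * k) := by rw [commutatorElement_def, inv_mul_cancel_right]
        _ = ⁅u, k⁆ ^ (q + 1) * k := by rw [pow_succ, mul_assoc]
  rw [commutatorElement_def, hconj, mul_inv_cancel_right]

theorem commutatorElement_pow_left_mem_iff {M : Subgroup G} [M.Normal] {u k : G}
    (h : ⁅u, ⁅u, k⁆⁆ ∈ M) (q : ℕ) : ⁅u ^ q, k⁆ ∈ M ↔ ⁅u, k⁆ ^ q ∈ M := by
  let π := QuotientGroup.mk' M
  have hπ : ∀ x, π x = 1 ↔ x ∈ M := QuotientGroup.eq_one_iff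
  have hcomm : Commute (π u) ⁅π u, π k⁆ := by
    rw [← commutatorElement_eq_one_iff_commute, ← map_commutatorElement, ← map_commutatorElement]
    exact (hπ _).2 h
  rw [← hπ, ← hπ, map_commutatorElement, map_pow, map_pow, map_commutatorElement,
    commutatorElement_pow_left_of_commute hcomm]

theorem commutatorElement_mem_of_mem_closure {M : Subgroup G} [M.Normal] {S : Set G}
    (hS : ∀ s ∈ S, ∀ g, ⁅s, g⁆ ∈ M) {x : G} (hx : x ∈ closure S) (g : G) : ⁅x, g⁆ ∈ M :=
  (closure_le (Subgroup.upperCentralSeriesStep M)).2 hS hx g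

theorem pow_mem_of_mem_closure {M : Subgroup G} [M.Normal] {S : Set G} {p : ℕ}
    (hcomm : ∀ x ∈ closure S, ∀ y ∈ closure S, ⁅x, y⁆ ∈ M) (hS : ∀ s ∈ S, s ^ p ∈ M)
    {x : G} (hx : x ∈ closure S) : x ^ p ∈ M := by
  induction hx using closure_induction with
  | mem s hs => exact hS s hs
  | one => rw [one_pow]; exact one_mem M
  | mul x y hx hy ihx ihy =>
    rw [← QuotientGroup.eq_one_iff] at ihx ihy ⊢
    have hxy : Commute (x : G ⧸ M) y := by
      rw [← commutatorElement_eq_one_iff_commute, ← QuotientGroup.mk'_apply,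
        ← QuotientGroup.mk'_apply, ← map_commutatorElement, QuotientGroup.mk'_apply,
        QuotientGroup.eq_one_iff]
      exact hcomm x hx y hy
    rw [QuotientGroup.mk_pow, QuotientGroup.mk_mul, hxy.mul_pow, ← QuotientGroup.mk_pow,
      ← QuotientGroup.mk_pow, ihx, ihy, one_mul]
  | inv x hx ih => rw [inv_pow]; exact inv_mem ih

end Commutators

section Filtration

open Subgroup

variable {G : Type*} [Group G]

structure IsPCentralFiltration (p : ℕ) (N : ℕ → Subgroup G) : Prop where
  normal : ∀ w, (N w).Normal
  commutatorElement_mem : ∀ w, ∀ a ∈ N w, ∀ g, ⁅a, g⁆ ∈ N (w + 1)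
  pow_mem : ∀ w, ∀ a ∈ N w, a ^ p ∈ N (w + 1)

theorem isPCentralFiltration_bot (p : ℕ) : IsPCentralFiltration p (fun _ => (⊥ : Subgroup G)) where
  normal _ := normal_bot
  commutatorElement_mem _ a ha g := by rw [mem_bot] at ha ⊢; rw [ha, commutatorElement_one_left]
  pow_mem _ a ha := by rw [mem_bot] at ha ⊢; rw [ha, one_pow]

theorem IsPCentralFiltration.commutatorElement_pow_pow_mem {p : ℕ} {N : ℕ → Subgroup G}
    (hN : IsPCentralFiltration p N) {x k : G} {w : ℕ} (h : ⁅x, k⁆ ∈ N w) (s : ℕ) :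
    ⁅x ^ p ^ s, k⁆ ∈ N (w + s) := by
  induction s with
  | zero => simpa using h
  | succ s ih =>
    have := hN.normal (w + s + 1)
    have hc : ⁅x ^ p ^ s, ⁅x ^ p ^ s, k⁆⁆ ∈ N (w + s + 1) := by
      rw [← commutatorElement_inv]
      exact inv_mem (hN.commutatorElement_mem _ _ ih _)
    rw [pow_succ, pow_mul, ← add_assoc, commutatorElement_pow_left_mem_iff hc]
    exact hN.pow_mem _ _ ih

end Filtration

namespace Subgroup

variable {G : Type*} [Group G] {K : Subgroup G} {p : ℕ}

/-- `w + j ≤ n + r` says that the weight `(n - j) + r` of `a ^ p ^ r` is at least `w`, without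
truncated subtraction. -/
def weightFiltration (K : Subgroup G) (p n w : ℕ) : Subgroup G :=
  closure {z | ∃ j r, ∃ a ∈ K ⊓ upperCentralSeries G j, j ≤ n ∧ w + j ≤ n + r ∧ a ^ p ^ r = z}

theorem pow_mem_weightFiltration {n w j r : ℕ} {a : G} (ha : a ∈ K ⊓ upperCentralSeries G j)
    (hj : j ≤ n) (hw : w + j ≤ n + r) : a ^ p ^ r ∈ K.weightFiltration p n w :=
  subset_closure ⟨j, r, a, ha, hj, hw, rfl⟩

theorem weightFiltration_anti {n w w' : ℕ} (h : w ≤ w') :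
    K.weightFiltration p n w' ≤ K.weightFiltration p n w :=
  closure_mono fun _ ⟨j, r, a, ha, hj, hw, hz⟩ => ⟨j, r, a, ha, hj, by omega, hz⟩

theorem weightFiltration_le_succ {n w : ℕ} :
    K.weightFiltration p n w ≤ K.weightFiltration p (n + 1) (w + 1) :=
  closure_mono fun _ ⟨j, r, a, ha, hj, hw, hz⟩ => ⟨j, r, a, ha, by omega, by omega, hz⟩

theorem le_weightFiltration_zero {n : ℕ} (hKle : K ≤ upperCentralSeries G n) :
    K ≤ K.weightFiltration p n 0 := fun k hk => by
  simpa using pow_mem_weightFiltration (p := p) (r := 0) ⟨hk, hKle hk⟩ le_rfl (by omega)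

theorem weightFiltration_normal (hK : K.Normal) (n w : ℕ) : (K.weightFiltration p n w).Normal :=
  normalizer_eq_top_iff.1 <| top_le_iff.1 <| le_normalizer_closure_iff.2
    fun g _ _ ⟨j, r, a, ⟨haK, haZ⟩, hj, hw, hz⟩ => subset_closure
      ⟨j, r, g * a * g⁻¹, ⟨hK.conj_mem a haK g, (normal_of_characteristic _).conj_mem a haZ g⟩,
        hj, hw, by rw [← hz, ← MulAut.conj_apply, ← MulAut.conj_apply, map_pow]⟩

theorem weightFiltration_zero_left (w : ℕ) : K.weightFiltration p 0 w = ⊥ := by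
  refine (closure_le _).2 ?_ |>.antisymm bot_le
  rintro _ ⟨j, r, a, ha, hj, -, rfl⟩
  obtain rfl : j = 0 := by omega
  obtain rfl : a = 1 := mem_bot.1 ha.2
  rw [SetLike.mem_coe, one_pow]
  exact one_mem _

theorem weightFiltration_eq_bot {e n w : ℕ} (he : ∀ a ∈ K, a ^ p ^ e = 1) (hw : n + e ≤ w) :
    K.weightFiltration p n w = ⊥ := by
  refine (closure_le _).2 ?_ |>.antisymm bot_le
  rintro _ ⟨j, r, a, ha, -, hr, rfl⟩
  obtain ⟨d, rfl⟩ := Nat.exists_eq_add_of_le (show e ≤ r by omega)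
  rw [SetLike.mem_coe, mem_bot, pow_add, pow_mul, he a ha.1, one_pow]

theorem commutatorElement_pow_mem_weightFiltration (hK : K.Normal) {n : ℕ}
    (hN : IsPCentralFiltration p (K.weightFiltration p n)) {a : G}
    (ha : a ∈ K ⊓ upperCentralSeries G (n + 1)) (g : G) (r : ℕ) :
    ⁅a ^ p ^ r, g⁆ ∈ K.weightFiltration p n r := by
  have hK' : ⁅a, g⁆ ∈ K := commutator_le_left K ⊤ (commutator_mem_commutator ha.1 (mem_top g))
  have h0 : ⁅a, g⁆ ∈ K.weightFiltration p n 0 := by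
    simpa using pow_mem_weightFiltration (p := p) (r := 0) ⟨hK', ha.2 g⟩ le_rfl (by omega)
  simpa using hN.commutatorElement_pow_pow_mem h0 r

theorem isPCentralFiltration_weightFiltration (hK : K.Normal) (n : ℕ) :
    IsPCentralFiltration p (K.weightFiltration p n) := by
  induction n with
  | zero =>
    rw [show K.weightFiltration p 0 = fun _ => ⊥ from funext weightFiltration_zero_left]
    exact isPCentralFiltration_bot p
  | succ n ih =>
    have hcomm : ∀ w, ∀ x ∈ K.weightFiltration p (n + 1) w, ∀ g,
        ⁅x, g⁆ ∈ K.weightFiltration p (n + 1) (w + 1) := by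
      intro w x hx
      have := weightFiltration_normal (p := p) hK (n + 1) (w + 1)
      refine commutatorElement_mem_of_mem_closure ?_ hx
      rintro _ ⟨j, r, a, ha, hj, hw, rfl⟩ g
      apply weightFiltration_le_succ
      rcases Nat.lt_or_eq_of_le hj with hj | rfl
      · exact weightFiltration_anti (by omega)
          (ih.commutatorElement_mem (w - 1) _ (pow_mem_weightFiltration ha (by omega) (by omega)) g)
      · exact weightFiltration_anti (by omega)
          (commutatorElement_pow_mem_weightFiltration hK ih ha g r)
    refine ⟨weightFiltration_normal hK (n + 1), hcomm, fun w x hx => ?_⟩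
    have := weightFiltration_normal (p := p) hK (n + 1) (w + 1)
    refine pow_mem_of_mem_closure (fun y hy z _ => hcomm w y hy z) ?_ hx
    rintro _ ⟨j, r, a, ha, hj, hw, rfl⟩
    rw [← pow_mul, ← pow_succ]
    exact pow_mem_weightFiltration ha hj (by omega)

end Subgroup

theorem stmt_9_general {G : Type*} [Group G] (p : ℕ) (n e : ℕ)
    (K : Subgroup G) (hKnorm : K.Normal)
    (hKle : K ≤ upperCentralSeries G n) (hexp : Monoid.exponent K = p ^ e) :
    (∀ x : G, ∀ k ∈ K, Commute (x ^ p ^ (e + n)) k) ∧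
      Subgroup.closure {z : G | ∃ x : G, z = x ^ p ^ (e + n)} ≤
        Subgroup.centralizer (K : Set G) := by
  have he : ∀ k ∈ K, k ^ p ^ e = 1 := fun k hk => by
    simpa [hexp] using congrArg Subtype.val (Monoid.pow_exponent_eq_one (⟨k, hk⟩ : K))
  have hcomm : ∀ x : G, ∀ k ∈ K, Commute (x ^ p ^ (e + n)) k := by
    intro x k hk
    have h0 : ⁅x, k⁆ ∈ K.weightFiltration p n 0 :=
      K.le_weightFiltration_zero hKle <| Subgroup.commutator_le_right ⊤ K <|
        Subgroup.commutator_mem_commutator (Subgroup.mem_top x) hk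
    have h := (K.isPCentralFiltration_weightFiltration hKnorm n).commutatorElement_pow_pow_mem
      h0 (e + n)
    rwa [K.weightFiltration_eq_bot he (by omega), Subgroup.mem_bot,
      commutatorElement_eq_one_iff_commute] at h
  refine ⟨hcomm, (Subgroup.closure_le _).2 ?_⟩
  rintro _ ⟨x, rfl⟩
  exact Subgroup.mem_centralizer_iff.2 fun k hk => (hcomm x k hk).symm

theorem stmt_9 {G : Type*} [Group G] [Finite G] (p : ℕ) (hp : p.Prime) (n e : ℕ)
    (K : Subgroup G) (hKnorm : K.Normal) (hKp : IsPGroup p K)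
    (hKle : K ≤ upperCentralSeries G n) (hexp : Monoid.exponent K = p ^ e) :
    (∀ x : G, ∀ k ∈ K, Commute (x ^ p ^ (e + n)) k) ∧
      Subgroup.closure {z : G | ∃ x : G, z = x ^ p ^ (e + n)} ≤
        Subgroup.centralizer (K : Set G) :=
  stmt_9_general p n e K hKnorm hKle hexp
end

section
/- Let G be a finite group and P a Sylow p-subgroup. If G = P·C_G(K) where K = ⟨x ∈ G : x^q = 1⟩ (q = p if p odd, q = 4 if p = 2), then P controls fusion of cyclic subgroups of order p (of order 2 and 4 when p = 2) in G. -/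
/-- `A` is a cyclic subgroup of order `p` (if `p` odd) or of order `2` or `4` (if `p = 2`). -/
def CpGroup {G : Type*} [Group G] (p : ℕ) (A : Subgroup G) : Prop :=
  (p ≠ 2 ∧ Nat.card A = p) ∨ (p = 2 ∧ IsCyclic A ∧ (Nat.card A = 2 ∨ Nat.card A = 4))

open scoped Pointwise in
theorem IsPGroup.exists_conj_mem_sylow {G : Type*} [Group G] [Finite G] {p : ℕ} [Fact p.Prime]
    {H : Subgroup G} (hH : IsPGroup p H) (P : Sylow p G) :
    ∃ g : G, ∀ a ∈ H, g⁻¹ * a * g ∈ (P : Subgroup G) := by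
  obtain ⟨Q, hHQ⟩ := hH.exists_le_sylow
  obtain ⟨g, rfl⟩ := MulAction.exists_smul_eq G P Q
  refine ⟨g, fun a ha => ?_⟩
  have hag : a ∈ MulAut.conj g • (P : Subgroup G) := by
    rw [← Sylow.coe_subgroup_smul]; exact hHQ ha
  simpa using Subgroup.mem_pointwise_smul_iff_inv_smul_mem.mp hag

theorem Subgroup.closure_setOf_pow_eq_one_normal {G : Type*} [Group G] (n : ℕ) :
    (Subgroup.closure {x : G | x ^ n = 1}).Normal := by
  suffices Subgroup.closure {x : G | x ^ n = 1} = Subgroup.normalClosure {x : G | x ^ n = 1} by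
    rw [this]; exact Subgroup.normalClosure_normal
  refine le_antisymm Subgroup.closure_le_normalClosure (Subgroup.closure_mono fun y hy => ?_)
  obtain ⟨x, hx, hxy⟩ := Group.mem_conjugatesOfSet_iff.mp hy
  obtain ⟨g, rfl⟩ := isConj_iff.mp hxy
  simp_all [conj_pow]

namespace CpGroup

variable {G : Type*} [Group G] {p : ℕ} {A : Subgroup G}

theorem card_dvd (hA : CpGroup p A) : Nat.card A ∣ if p = 2 then 4 else p := by
  rcases hA with ⟨hp2, hA⟩ | ⟨rfl, -, hA | hA⟩ <;> simp [*]

theorem pow_eq_one (hA : CpGroup p A) {a : G} (ha : a ∈ A) :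
    a ^ (if p = 2 then 4 else p) = 1 :=
  orderOf_dvd_iff_pow_eq_one.mp ((A.orderOf_dvd_natCard ha).trans hA.card_dvd)

theorem isPGroup (hA : CpGroup p A) : IsPGroup p A := by
  rcases hA with ⟨-, hA⟩ | ⟨rfl, -, hA | hA⟩
  · exact IsPGroup.of_card (n := 1) (by rw [hA, pow_one])
  · exact IsPGroup.of_card (n := 1) (by rw [hA, pow_one])
  · exact IsPGroup.of_card (n := 2) (by rw [hA]; norm_num)

end CpGroup

theorem stmt_10 {G : Type*} [Group G] [Finite G] (p : ℕ) (hp : p.Prime) (P : Sylow p G)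
    (hfac : ∀ g : G, ∃ x ∈ (P : Subgroup G),
      ∃ c ∈ Subgroup.centralizer
        ((Subgroup.closure {x : G | x ^ (if p = 2 then 4 else p) = 1} : Subgroup G) : Set G),
      g = x * c) :
    (∀ A : Subgroup G, CpGroup p A → ∃ g : G, ∀ a ∈ A, g⁻¹ * a * g ∈ (P : Subgroup G)) ∧
    (∀ A : Subgroup G, A ≤ (P : Subgroup G) → CpGroup p A → ∀ g : G,
      (∀ a ∈ A, g⁻¹ * a * g ∈ (P : Subgroup G)) →
      ∃ c ∈ Subgroup.centralizer (A : Set G), ∃ x ∈ (P : Subgroup G), g = c * x) := by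
  have : Fact p.Prime := ⟨hp⟩
  refine ⟨fun A hA => hA.isPGroup.exists_conj_mem_sylow P, fun A _ hA g _ => ?_⟩
  set K := Subgroup.closure {x : G | x ^ (if p = 2 then 4 else p) = 1}
  have : K.Normal := Subgroup.closure_setOf_pow_eq_one_normal _
  have hAK : (A : Set G) ⊆ K := fun a ha => Subgroup.subset_closure (hA.pow_eq_one ha)
  obtain ⟨x, hx, c, hc, rfl⟩ := hfac g
  -- `C_G(K)` is normal, so `x c = (x c x⁻¹) x` with `x c x⁻¹ ∈ C_G(K) ≤ C_G(A)`.
  exact ⟨x * c * x⁻¹, Subgroup.centralizer_le hAK (Subgroup.Normal.conj_mem inferInstance c hc x),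
    x, hx, by group⟩
end

section
/- Let f : A → B be an F-isomorphism of commutative F_p-algebras (the kernel of f is a nil ideal, and for every b ∈ B there exists k ≥ 0 with b^{p^k} ∈ im f). Then the map sending a radical ideal 𝔞 of A to the radical of the ideal generated by f(𝔞), with inverse sending a radical ideal 𝔟 of B to f⁻¹(𝔟), is a bijection between radical ideals of A and radical ideals of B. -/
/-!
If `b ∈ 𝔞 B`, then some `b ^ p ^ k` lies in `f 𝔞`: the elements with this property form an ideal
of `B`, because Frobenius is additive and every scalar of `B` has a `p`-power in the image of `f`.
Hence `f a ∈ 𝔞 B` forces `a ^ p ^ k ∈ 𝔞 + ker f`, which is inside `√𝔞` as `ker f` is nil; so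
`f⁻¹ √(𝔞 B) = √𝔞`. Conversely every `b` in `𝔟` has a power in `f (f⁻¹ 𝔟)`, so `√(f (f⁻¹ 𝔟) B) = 𝔟`
for radical `𝔟`.
-/

namespace Ideal

variable {A B : Type*} [CommRing A] [CommRing B] {p : ℕ} {f : A →+* B}

theorem exists_pow_eq_of_mem_map_of_charP [Fact p.Prime] [CharP B p]
    (hsurj : ∀ b : B, ∃ k : ℕ, b ^ p ^ k ∈ f.range) {I : Ideal A} {b : B} (hb : b ∈ I.map f) :
    ∃ k : ℕ, ∃ a ∈ I, f a = b ^ p ^ k := by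
  have hpos (n : ℕ) : 0 < p ^ n := pow_pos (Fact.out : p.Prime).pos n
  refine Submodule.span_induction ?_ ⟨0, 0, I.zero_mem, by simp⟩ ?_ ?_ hb
  · rintro _ ⟨a, ha, rfl⟩
    exact ⟨0, a, ha, by simp⟩
  · rintro x y - - ⟨k, a, ha, hax⟩ ⟨l, c, hc, hcy⟩
    refine ⟨k + l, a ^ p ^ l + c ^ p ^ k,
      I.add_mem (I.pow_mem_of_mem ha _ (hpos l)) (I.pow_mem_of_mem hc _ (hpos k)), ?_⟩
    rw [add_pow_char_pow, map_add, map_pow, map_pow, hax, hcy, ← pow_mul, ← pow_mul,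
      ← pow_add, ← pow_add, Nat.add_comm l k]
  · rintro x y - ⟨k, a, ha, hay⟩
    obtain ⟨l, c, hcx⟩ := hsurj x
    refine ⟨l + k, c ^ p ^ k * a ^ p ^ l, I.mul_mem_left _ (I.pow_mem_of_mem ha _ (hpos l)), ?_⟩
    rw [smul_eq_mul, mul_pow, map_mul, map_pow, map_pow, hay, hcx, ← pow_mul, ← pow_mul,
      ← pow_add, ← pow_add, Nat.add_comm k l]

theorem exists_pow_eq_of_mem_map [Fact p.Prime] [Algebra (ZMod p) B]
    (hsurj : ∀ b : B, ∃ k : ℕ, b ^ p ^ k ∈ f.range) {I : Ideal A} {b : B} (hb : b ∈ I.map f) :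
    ∃ k : ℕ, ∃ a ∈ I, f a = b ^ p ^ k := by
  rcases subsingleton_or_nontrivial B with hB | hB
  · exact ⟨0, 0, I.zero_mem, Subsingleton.elim _ _⟩
  · have : CharP B p := charP_of_injective_algebraMap (algebraMap (ZMod p) B).injective p
    exact exists_pow_eq_of_mem_map_of_charP hsurj hb

theorem comap_map_le_radical [Fact p.Prime] [Algebra (ZMod p) B]
    (hker : RingHom.ker f ≤ nilradical A) (hsurj : ∀ b : B, ∃ k : ℕ, b ^ p ^ k ∈ f.range)
    (I : Ideal A) : (I.map f).comap f ≤ I.radical := by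
  intro a ha
  obtain ⟨k, c, hc, hca⟩ := exists_pow_eq_of_mem_map hsurj (mem_comap.1 ha)
  have hdiff : a ^ p ^ k - c ∈ I.radical :=
    radical_mono bot_le <| hker <| by rw [RingHom.mem_ker, map_sub, map_pow, hca, sub_self]
  have hpow : a ^ p ^ k ∈ I.radical := by
    simpa using I.radical.add_mem hdiff (le_radical hc)
  exact I.radical_isRadical ⟨_, hpow⟩

theorem comap_radical_map [Fact p.Prime] [Algebra (ZMod p) B]
    (hker : RingHom.ker f ≤ nilradical A) (hsurj : ∀ b : B, ∃ k : ℕ, b ^ p ^ k ∈ f.range)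
    (I : Ideal A) : (I.map f).radical.comap f = I.radical := by
  rw [comap_radical]
  refine le_antisymm ?_ (radical_mono le_comap_map)
  rw [radical_le_radical_iff]
  exact comap_map_le_radical hker hsurj I

theorem le_radical_map_comap (hp : 0 < p) (hsurj : ∀ b : B, ∃ k : ℕ, b ^ p ^ k ∈ f.range)
    (J : Ideal B) : J ≤ ((J.comap f).map f).radical := by
  intro b hb
  obtain ⟨k, a, ha⟩ := hsurj b
  have : a ∈ J.comap f := mem_comap.2 (ha ▸ J.pow_mem_of_mem hb _ (pow_pos hp k))
  exact ⟨p ^ k, ha ▸ mem_map_of_mem f this⟩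

end Ideal

open Ideal in
theorem stmt_11_general {A B : Type*} [CommRing A] [CommRing B] (p : ℕ) (hp : p.Prime)
    [Algebra (ZMod p) B] (f : A →+* B)
    (hker : ∀ a ∈ RingHom.ker f, IsNilpotent a)
    (hsurj : ∀ b : B, ∃ k : ℕ, b ^ p ^ k ∈ f.range) :
    (∀ I : Ideal A, I.IsRadical → ((I.map f).radical).comap f = I) ∧
    (∀ J : Ideal B, J.IsRadical → (((J.comap f).map f).radical) = J) ∧
    (∀ I : Ideal A, ((I.map f).radical).IsRadical) ∧
    (∀ J : Ideal B, J.IsRadical → (J.comap f).IsRadical) := by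
  have : Fact p.Prime := ⟨hp⟩
  refine ⟨fun I hI => ?_, fun J hJ => ?_, fun I => radical_isRadical _, fun J hJ => hJ.comap f⟩
  · rw [comap_radical_map hker hsurj, hI.radical]
  · exact le_antisymm (hJ.radical_le_iff.2 map_comap_le) (le_radical_map_comap hp.pos hsurj J)

theorem stmt_11 {A B : Type*} [CommRing A] [CommRing B] (p : ℕ) (hp : p.Prime)
    [Algebra (ZMod p) A] [Algebra (ZMod p) B] (f : A →+* B)
    (hker : ∀ a ∈ RingHom.ker f, IsNilpotent a)
    (hsurj : ∀ b : B, ∃ k : ℕ, b ^ p ^ k ∈ f.range) :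
    (∀ I : Ideal A, I.IsRadical → ((I.map f).radical).comap f = I) ∧
    (∀ J : Ideal B, J.IsRadical → (((J.comap f).map f).radical) = J) ∧
    (∀ I : Ideal A, ((I.map f).radical).IsRadical) ∧
    (∀ J : Ideal B, J.IsRadical → (J.comap f).IsRadical) :=
  stmt_11_general p hp f hker hsurj
end

section
/- Let f : A → B be an F-isomorphism of commutative F_p-algebras. Then the induced map Spec(B) → Spec(A), 𝔮 ↦ f⁻¹(𝔮), is a homeomorphism of Zariski spectra. -/
theorem stmt_12_general {A B : Type*} [CommRing A] [CommRing B] (p : ℕ) (hp : p.Prime)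
    (f : A →+* B)
    (hker : ∀ a ∈ RingHom.ker f, IsNilpotent a)
    (hsurj : ∀ b : B, ∃ k : ℕ, b ^ p ^ k ∈ f.range) :
    IsHomeomorph (PrimeSpectrum.comap f) := by
  refine PrimeSpectrum.isHomeomorph_comap f (fun b ↦ ?_) fun a ha ↦ mem_nilradical.mpr (hker a ha)
  obtain ⟨k, hk⟩ := hsurj b
  exact ⟨p ^ k, pow_pos hp.pos k, hk⟩

theorem stmt_12 {A B : Type*} [CommRing A] [CommRing B] (p : ℕ) (hp : p.Prime)
    [Algebra (ZMod p) A] [Algebra (ZMod p) B] (f : A →+* B)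
    (hker : ∀ a ∈ RingHom.ker f, IsNilpotent a)
    (hsurj : ∀ b : B, ∃ k : ℕ, b ^ p ^ k ∈ f.range) :
    IsHomeomorph (PrimeSpectrum.comap f) :=
  stmt_12_general p hp f hker hsurj
end

section
/- Let f : A → B be an F-isomorphism of commutative F_p-algebras. Then for every radical ideal 𝔞 of A one has f⁻¹(√(f(𝔞)·B)) = 𝔞. -/
namespace Ideal

variable {A B : Type*} [CommRing A] [CommRing B]

/-- Frobenius is additive on `B` and every element of `B` has a `p`-power in `f.range`, so the
elements `y` with some `y ^ p ^ k ∈ f '' I` form an ideal containing `f '' I`. -/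
theorem exists_apply_eq_pow_expChar_pow_of_mem_map (p : ℕ) [ExpChar B p] (f : A →+* B)
    (hsurj : ∀ b : B, ∃ k : ℕ, b ^ p ^ k ∈ f.range) (I : Ideal A) {y : B} (hy : y ∈ I.map f) :
    ∃ k : ℕ, ∃ x ∈ I, f x = y ^ p ^ k := by
  have hpos : ∀ k, 0 < p ^ k := fun k => pow_pos (expChar_pos B p) k
  induction hy using Submodule.span_induction with
  | mem y hy =>
    obtain ⟨x, hx, rfl⟩ := hy
    exact ⟨0, x, hx, by simp⟩
  | zero => exact ⟨0, 0, I.zero_mem, by simp⟩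
  | add y z _ _ hy hz =>
    obtain ⟨k, x, hx, hfx⟩ := hy
    obtain ⟨l, w, hw, hfw⟩ := hz
    refine ⟨k + l, x ^ p ^ l + w ^ p ^ k,
      I.add_mem (I.pow_mem_of_mem hx _ (hpos l)) (I.pow_mem_of_mem hw _ (hpos k)), ?_⟩
    rw [add_pow_expChar_pow, map_add, map_pow, map_pow, hfx, hfw, ← pow_mul, ← pow_mul,
      ← pow_add, ← pow_add, add_comm l k]
  | smul b y _ hy =>
    obtain ⟨k, x, hx, hfx⟩ := hy
    obtain ⟨j, c, hc⟩ := hsurj b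
    refine ⟨k + j, c ^ p ^ k * x ^ p ^ j, I.mul_mem_left _ (I.pow_mem_of_mem hx _ (hpos j)), ?_⟩
    rw [smul_eq_mul, mul_pow, map_mul, map_pow, map_pow, hc, hfx, ← pow_mul, ← pow_mul,
      ← pow_add, ← pow_add, add_comm j k]

theorem IsRadical.mem_of_apply_eq {I : Ideal A} (hI : I.IsRadical) {f : A →+* B}
    (hker : ∀ a ∈ RingHom.ker f, IsNilpotent a) {a x : A} (hx : x ∈ I) (h : f a = f x) :
    a ∈ I := by
  obtain ⟨m, hm⟩ := hker (a - x) (by rw [RingHom.mem_ker, map_sub, h, sub_self])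
  have hax : a - x ∈ I := hI ⟨m, hm ▸ I.zero_mem⟩
  simpa using I.add_mem hax hx

theorem comap_radical_map_eq_of_expChar (p : ℕ) [ExpChar B p] (f : A →+* B)
    (hker : ∀ a ∈ RingHom.ker f, IsNilpotent a)
    (hsurj : ∀ b : B, ∃ k : ℕ, b ^ p ^ k ∈ f.range) {I : Ideal A} (hI : I.IsRadical) :
    (I.map f).radical.comap f = I := by
  refine le_antisymm (fun a ha => ?_) (fun a ha => le_radical (mem_map_of_mem f ha))
  obtain ⟨n, hn⟩ := ha
  obtain ⟨k, x, hx, hfx⟩ := exists_apply_eq_pow_expChar_pow_of_mem_map p f hsurj I hn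
  have hpow : a ^ (n * p ^ k) ∈ I :=
    hI.mem_of_apply_eq hker hx (by rw [hfx, map_pow, pow_mul])
  exact hI ⟨_, hpow⟩

end Ideal

theorem stmt_13_general {A B : Type*} [CommRing A] [CommRing B] (p : ℕ) (hp : p.Prime)
    [Algebra (ZMod p) B] (f : A →+* B)
    (hker : ∀ a ∈ RingHom.ker f, IsNilpotent a)
    (hsurj : ∀ b : B, ∃ k : ℕ, b ^ p ^ k ∈ f.range) :
    ∀ I : Ideal A, I.IsRadical → ((I.map f).radical).comap f = I := by
  intro I hI
  rcases subsingleton_or_nontrivial B with hB | hB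
  · obtain ⟨m, hm⟩ := hker 1 (Subsingleton.elim _ _)
    have hI_top : I = ⊤ := I.eq_top_iff_one.mpr (hI ⟨m, hm ▸ I.zero_mem⟩)
    rw [hI_top]
    exact eq_top_iff.mpr fun a _ => by simp [Ideal.mem_comap, Subsingleton.elim (f a) 0]
  · have : Fact p.Prime := ⟨hp⟩
    have : CharP B p := charP_of_injective_algebraMap' (ZMod p) p
    have : ExpChar B p := .prime hp
    exact Ideal.comap_radical_map_eq_of_expChar p f hker hsurj hI

theorem stmt_13 {A B : Type*} [CommRing A] [CommRing B] (p : ℕ) (hp : p.Prime)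
    [Algebra (ZMod p) A] [Algebra (ZMod p) B] (f : A →+* B)
    (hker : ∀ a ∈ RingHom.ker f, IsNilpotent a)
    (hsurj : ∀ b : B, ∃ k : ℕ, b ^ p ^ k ∈ f.range) :
    ∀ I : Ideal A, I.IsRadical → ((I.map f).radical).comap f = I :=
  stmt_13_general p hp f hker hsurj
end

section
/- Let G be a finite p-group, g an automorphism of G of order coprime to p, and suppose that g fixes every element of G of order p if p is odd, respectively every element of order 2 and 4 if p = 2. Then g is the identity automorphism. -/
/-!
Write `d x = x⁻¹ * g x`. If `g` fixes `d x`, then `(g ^ k) x = x * d x ^ k`; as `d x` is a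
`p`-element and `orderOf g` is prime to `p`, taking `k = orderOf g` gives `d x = 1`, so `g` fixes
`x`.

If `G` has class at most two, the identity `(a⁻¹ * b) ^ p = ⁅b, a⁻¹⁆ ^ p.choose 2`, together with
`⁅b, a⁻¹⁆ ^ p = ⁅b ^ p, a⁻¹⁆ = 1` when `a ^ p = b ^ p`, shows by induction on the exponent of `x`
that `g` fixes `x ^ p` and then `d x`, whose `p`-th (or `4`-th) power is trivial.

In general, by induction on `|G|`, `g` fixes the proper characteristic subgroups `G'` and
`C = C_G(G')` pointwise. Since `g` fixes `G'`, conjugation by `x` and by `g x` agree on `G'`, so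
`d x ∈ C` is fixed. Hence either `C = G`, i.e. `G` has class at most two, or `g = 1`.
-/

open Subgroup commutatorElement

section CommutatorPowers

variable {G : Type*} [Group G]

theorem commutatorElement_pow_left {a b : G} (hb : Commute ⁅b, a⁆ b) (n : ℕ) :
    ⁅b ^ n, a⁆ = ⁅b, a⁆ ^ n := by
  induction n with
  | zero => simp
  | succ n ih =>
    rw [pow_succ', commutatorElement_mul_left_eq_conj_mul, ih, ← (hb.pow_left n).eq,
      mul_inv_cancel_right, pow_succ]

theorem mul_pow_eq_pow_mul_pow_mul_commutatorElement_pow {a b : G} (ha : Commute ⁅b, a⁆ a)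
    (hb : Commute ⁅b, a⁆ b) (n : ℕ) :
    (a * b) ^ n = a ^ n * b ^ n * ⁅b, a⁆ ^ n.choose 2 := by
  induction n with
  | zero => simp
  | succ n ih =>
    set c := ⁅b, a⁆
    have hswap : b ^ n * a = c ^ n * a * b ^ n := by
      rw [← commutatorElement_pow_left hb, commutatorElement_def]; group
    calc (a * b) ^ (n + 1) = a ^ n * b ^ n * (c ^ n.choose 2 * a) * b := by
          rw [pow_succ, ih]; group
      _ = a ^ n * (b ^ n * a) * (c ^ n.choose 2 * b) := by rw [(ha.pow_left _).eq]; group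
      _ = a ^ n * (c ^ n * a) * (b ^ n * b) * c ^ n.choose 2 := by
          rw [hswap, (hb.pow_left _).eq]; group
      _ = a ^ (n + 1) * (c ^ n * b ^ (n + 1)) * c ^ n.choose 2 := by
          rw [(ha.pow_left n).eq]; group
      _ = a ^ (n + 1) * b ^ (n + 1) * c ^ (n + 1).choose 2 := by
          rw [((hb.pow_left n).pow_right (n + 1)).eq, Nat.choose_succ_succ, Nat.choose_one_right,
            pow_add]
          group

theorem inv_mul_pow_eq_one_of_pow_eq_pow {p : ℕ} (hp : p.Prime) {a b : G}
    (hZ : ⁅b, a⁻¹⁆ ∈ center G) (hab : a ^ p = b ^ p) :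
    (a⁻¹ * b) ^ (if p = 2 then 4 else p) = 1 := by
  have hcentral : ∀ x : G, Commute ⁅b, a⁻¹⁆ x := fun x => (mem_center_iff.mp hZ x).symm
  have hc : ⁅b, a⁻¹⁆ ^ p = 1 := by
    rw [← commutatorElement_pow_left (hcentral b), ← hab]
    exact ((Commute.refl a).pow_left p).inv_right.commutator_eq
  have hpow : (a⁻¹ * b) ^ p = ⁅b, a⁻¹⁆ ^ p.choose 2 := by
    rw [mul_pow_eq_pow_mul_pow_mul_commutatorElement_pow (hcentral _) (hcentral _), inv_pow, ← hab,
      inv_mul_cancel, one_mul]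
  split_ifs with hp2
  · subst hp2
    rw [show 4 = 2 * 2 from rfl, pow_mul, hpow, Nat.choose_self, pow_one, hc]
  · obtain ⟨t, ht⟩ := hp.dvd_choose_self two_ne_zero (lt_of_le_of_ne hp.two_le (Ne.symm hp2))
    rw [hpow, ht, pow_mul, hc, one_pow]

end CommutatorPowers

section Automorphisms

variable {G : Type*} [Group G]

theorem MulAut.pow_apply_eq_mul_pow {g : MulAut G} {x d : G} (hx : g x = x * d) (hd : g d = d)
    (k : ℕ) : (g ^ k) x = x * d ^ k := by
  induction k with
  | zero => simp
  | succ k ih =>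
    rw [pow_succ', MulAut.mul_apply, ih, map_mul, hx, map_pow, hd, mul_assoc, ← pow_succ']

theorem IsPGroup.apply_eq_self_of_apply_inv_mul_apply_eq_self {p : ℕ} (hG : IsPGroup p G)
    {g : MulAut G} (hg : (orderOf g).Coprime p) {x : G} (h : g (x⁻¹ * g x) = x⁻¹ * g x) :
    g x = x := by
  set d := x⁻¹ * g x
  have hx : g x = x * d := by simp [d]
  have hd : d ^ orderOf g = 1 := by
    simpa [pow_orderOf_eq_one] using (MulAut.pow_apply_eq_mul_pow hx h (orderOf g)).symm
  obtain ⟨k, hk⟩ := hG d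
  have hd1 : d = 1 := orderOf_eq_one_iff.mp <|
    ((hg.coprime_dvd_left (orderOf_dvd_of_pow_eq_one hd)).pow_right k).eq_one_of_dvd
      (orderOf_dvd_of_pow_eq_one hk)
  rw [hx, hd1, mul_one]

theorem MulAut.inv_mul_apply_mem_centralizer {N : Subgroup G} [N.Normal] {g : MulAut G}
    (hN : ∀ n ∈ N, g n = n) (x : G) : x⁻¹ * g x ∈ centralizer N := by
  rw [mem_centralizer_iff]
  intro n hn
  have hconj : g x * n * (g x)⁻¹ = x * n * x⁻¹ := by
    rw [← hN n hn, ← map_inv, ← map_mul, ← map_mul, hN _ (Normal.conj_mem ‹_› n hn x), hN n hn]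
  calc n * (x⁻¹ * g x) = x⁻¹ * (x * n * x⁻¹) * g x := by group
    _ = x⁻¹ * g x * n := by rw [← hconj]; group

theorem IsPGroup.mulAut_eq_one_of_commutatorElement_mem_center {p : ℕ} (hp : p.Prime)
    (hG : IsPGroup p G) (hZ : ∀ x y : G, ⁅x, y⁆ ∈ center G) {g : MulAut G}
    (hg : (orderOf g).Coprime p) (hfix : ∀ x : G, x ^ (if p = 2 then 4 else p) = 1 → g x = x) :
    g = 1 := by
  ext x
  obtain ⟨k, hk⟩ := hG x
  induction k generalizing x with
  | zero => rw [pow_zero, pow_one] at hk; simp [hk]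
  | succ k ih =>
    have hxp : g (x ^ p) = x ^ p := ih (x ^ p) (by rw [← pow_mul, ← pow_succ', hk])
    refine hG.apply_eq_self_of_apply_inv_mul_apply_eq_self hg (hfix _ ?_)
    exact inv_mul_pow_eq_one_of_pow_eq_pow hp (hZ _ _) (by rw [← map_pow, hxp])

end Automorphisms

theorem stmt_14 {G : Type*} [Group G] [Finite G] (p : ℕ) (hp : p.Prime)
    (hG : IsPGroup p G) (g : MulAut G) (hord : Nat.Coprime (orderOf g) p)
    (hfix : ∀ x : G, x ^ (if p = 2 then 4 else p) = 1 → g x = x) :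
    g = 1 := by
  have : Fact p.Prime := ⟨hp⟩
  induction hn : Nat.card G using Nat.strong_induction_on generalizing G with
  | _ n ih =>
  subst hn
  have hchar : ∀ (H : Subgroup G) [H.Characteristic], H ≠ ⊤ → ∀ x ∈ H, g x = x := by
    intro H _ hH x hx
    have hres := ih _ ((card_le_card_group H).lt_of_ne (mt (card_eq_iff_eq_top H).mp hH))
      (hG.to_subgroup H) (MulAut.characteristic H g)
      (hord.coprime_dvd_left (orderOf_map_dvd _ g))
      (fun y hy => Subtype.ext (hfix y (by exact_mod_cast congrArg Subtype.val hy))) rfl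
    exact congrArg Subtype.val (DFunLike.congr_fun hres ⟨x, hx⟩)
  by_cases hZ : ∀ x y : G, ⁅x, y⁆ ∈ center G
  · exact hG.mulAut_eq_one_of_commutatorElement_mem_center hp hZ hord hfix
  have : Nontrivial G := by
    contrapose! hZ
    exact fun x y => Subsingleton.elim (1 : G) ⁅x, y⁆ ▸ one_mem _
  have := hG.isNilpotent
  have hG' := (Group.IsSolvable.commutator_lt_top_of_nontrivial G).ne
  have hC : centralizer (commutator G : Set G) ≠ ⊤ := by
    contrapose! hZ
    exact fun x y =>
      centralizer_eq_top_iff_subset.mp hZ (commutator_mem_commutator (mem_top x) (mem_top y))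
  ext x
  exact hG.apply_eq_self_of_apply_inv_mul_apply_eq_self hord
    (hchar _ hC _ (MulAut.inv_mul_apply_mem_centralizer (hchar _ hG') x))
end

section
/- Let G be a finite group, P a Sylow p-subgroup, B ≤ Z(P), and g ∈ N_G(B) a p'-element. If P controls fusion of cyclic subgroups of order p (of order 2 and 4 when p = 2) in G, then g centralizes B. -/
/-!
Write `c = ⁅g, b⁆`, so that conjugation by `g` sends `b` to `c * b`. If `g` commutes with `c`,
then conjugation by `g ^ k` sends `b` to `c ^ k * b`, and `k = orderOf g` forces `c ^ k = 1`;
so `c = 1` as soon as the orders of `c` and `g` are coprime.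

For `b` in the abelian `p`-group `B` normalized by `g`, the commutator `⁅g, b⁆` lies in `B` and
`⁅g, b⁆ ^ p = ⁅g, b ^ p⁆`. Inducting on the exponent of `b`, `g` commutes with `b ^ p`, so `⁅g, b⁆`
has order dividing `p`; it remains to see that `g` centralizes the elements of order `p` of `B`.
For such `b`, control of fusion applied to `⟨b⟩` and its conjugate `⟨b⟩ ^ g ≤ B ≤ P` writes
`g = y * x` with `y` centralizing `b` and `x ∈ P`, and `x` centralizes `b` because `B ≤ Z(P)`.
-/

open scoped commutatorElement

section

variable {G : Type*} [Group G]

theorem conj_pow_eq_commutatorElement_pow_mul {g b : G}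
    (h : Commute g ⁅g, b⁆) (k : ℕ) : g ^ k * b * (g ^ k)⁻¹ = ⁅g, b⁆ ^ k * b := by
  induction k with
  | zero => simp
  | succ k ih =>
    calc g ^ (k + 1) * b * (g ^ (k + 1))⁻¹ = g * (g ^ k * b * (g ^ k)⁻¹) * g⁻¹ := by group
      _ = g * ⁅g, b⁆ ^ k * g⁻¹ * (g * b * g⁻¹) := by rw [ih]; group
      _ = ⁅g, b⁆ ^ (k + 1) * b := by
        rw [(h.pow_right k).eq, mul_inv_cancel_right, pow_succ, mul_assoc, commutatorElement_def]
        group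

theorem commute_of_commute_commutatorElement {g b : G}
    (h : Commute g ⁅g, b⁆) (hcop : (orderOf g).Coprime (orderOf ⁅g, b⁆)) : Commute g b := by
  have hpow : ⁅g, b⁆ ^ orderOf g = 1 := by
    simpa [pow_orderOf_eq_one] using (conj_pow_eq_commutatorElement_pow_mul h (orderOf g)).symm
  have hord : orderOf ⁅g, b⁆ = 1 := hcop.symm.eq_one_of_dvd (orderOf_dvd_of_pow_eq_one hpow)
  exact commutatorElement_eq_one_iff_commute.mp (orderOf_eq_one_iff.mp hord)

theorem conj_mem_of_mem_normalizer {B : Subgroup G} {g b : G}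
    (hg : g ∈ Subgroup.normalizer (B : Set G)) (hb : b ∈ B) : g * b * g⁻¹ ∈ B :=
  (Subgroup.mem_normalizer_iff.mp hg b).mp hb

theorem commute_of_forall_orderOf_eq_prime {p : ℕ} [Fact p.Prime]
    {B : Subgroup G} {g : G} (hB : ∀ a ∈ B, ∀ b ∈ B, Commute a b)
    (hg : g ∈ Subgroup.normalizer (B : Set G)) (hg' : (orderOf g).Coprime p)
    (hBp : IsPGroup p B) (hbase : ∀ b ∈ B, orderOf b = p → Commute g b) :
    ∀ b ∈ B, Commute g b := by
  suffices ∀ m : ℕ, ∀ b ∈ B, b ^ p ^ m = 1 → Commute g b by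
    intro b hb
    obtain ⟨m, hm⟩ := hBp ⟨b, hb⟩
    exact this m b hb (by simpa using congrArg Subtype.val hm)
  intro m
  induction m with
  | zero =>
    intro b _ hb
    rw [pow_zero, pow_one] at hb
    exact hb ▸ Commute.one_right g
  | succ m ih =>
    intro b hb hbm
    have hgbp : Commute g (b ^ p) :=
      ih _ (B.pow_mem hb p) (by rwa [← pow_mul, ← pow_succ'])
    have hcB : ⁅g, b⁆ ∈ B := B.mul_mem (conj_mem_of_mem_normalizer hg hb) (B.inv_mem hb)
    have hcp : ⁅g, b⁆ ^ p = 1 := by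
      rw [commutatorElement_def,
        (hB _ (conj_mem_of_mem_normalizer hg hb) _ (B.inv_mem hb)).mul_pow, conj_pow, inv_pow,
        hgbp.eq]
      group
    have hgc : Commute g ⁅g, b⁆ := by
      rcases eq_or_ne ⁅g, b⁆ 1 with h | h
      · exact h ▸ Commute.one_right g
      · exact hbase _ hcB (orderOf_eq_prime hcp h)
    exact commute_of_commute_commutatorElement hgc
      (hg'.coprime_dvd_right (orderOf_dvd_of_pow_eq_one hcp))

theorem zpowers_fusion_condition {p : ℕ} {b : G} (hb : orderOf b = p) :
    (p ≠ 2 ∧ Nat.card (Subgroup.zpowers b) = p) ∨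
      (p = 2 ∧ IsCyclic (Subgroup.zpowers b) ∧
        (Nat.card (Subgroup.zpowers b) = 2 ∨ Nat.card (Subgroup.zpowers b) = 4)) := by
  rw [Nat.card_zpowers, hb]
  by_cases h2 : p = 2
  · exact Or.inr ⟨h2, Subgroup.isCyclic_zpowers b, Or.inl h2⟩
  · exact Or.inl ⟨h2, rfl⟩

end

theorem stmt_16_general {G : Type*} [Group G] (p : ℕ) (hp : p.Prime) (P : Sylow p G)
    (B : Subgroup G) (hBP : B ≤ (P : Subgroup G))
    (hBZ : ∀ b ∈ B, ∀ x ∈ (P : Subgroup G), b * x = x * b)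
    (g : G) (hg : g ∈ Subgroup.normalizer (B : Set G)) (hg' : Nat.Coprime (orderOf g) p)
    (hfus : ∀ A : Subgroup G,
      ((p ≠ 2 ∧ Nat.card A = p) ∨ (p = 2 ∧ IsCyclic A ∧ (Nat.card A = 2 ∨ Nat.card A = 4))) →
      A ≤ (P : Subgroup G) → ∀ h : G, (∀ a ∈ A, h⁻¹ * a * h ∈ (P : Subgroup G)) →
      ∃ c ∈ Subgroup.centralizer (A : Set G), ∃ x ∈ (P : Subgroup G), h = c * x) :
    ∀ b ∈ B, g * b = b * g := by
  have : Fact p.Prime := ⟨hp⟩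
  have hB : ∀ a ∈ B, ∀ b ∈ B, Commute a b := fun a ha b hb => hBZ a ha b (hBP hb)
  refine commute_of_forall_orderOf_eq_prime hB hg hg' (P.2.to_le hBP) fun b hb hbp => ?_
  have hbB : Subgroup.zpowers b ≤ B := Subgroup.zpowers_le.mpr hb
  have hconj : ∀ a ∈ Subgroup.zpowers b, g⁻¹ * a * g ∈ (P : Subgroup G) := fun a ha =>
    hBP (by simpa using conj_mem_of_mem_normalizer (inv_mem hg) (hbB ha))
  obtain ⟨c, hc, x, hx, rfl⟩ :=
    hfus _ (zpowers_fusion_condition hbp) (hbB.trans hBP) g hconj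
  have hcb : Commute c b := (Subgroup.mem_centralizer_iff.mp hc b (Subgroup.mem_zpowers b)).symm
  exact hcb.mul_left (hBZ b hb x hx).symm

theorem stmt_16 {G : Type*} [Group G] [Finite G] (p : ℕ) (hp : p.Prime) (P : Sylow p G)
    (B : Subgroup G) (hBP : B ≤ (P : Subgroup G))
    (hBZ : ∀ b ∈ B, ∀ x ∈ (P : Subgroup G), b * x = x * b)
    (g : G) (hg : g ∈ Subgroup.normalizer (B : Set G)) (hg' : Nat.Coprime (orderOf g) p)
    (hfus : ∀ A : Subgroup G,
      ((p ≠ 2 ∧ Nat.card A = p) ∨ (p = 2 ∧ IsCyclic A ∧ (Nat.card A = 2 ∨ Nat.card A = 4))) →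
      A ≤ (P : Subgroup G) → ∀ h : G, (∀ a ∈ A, h⁻¹ * a * h ∈ (P : Subgroup G)) →
      ∃ c ∈ Subgroup.centralizer (A : Set G), ∃ x ∈ (P : Subgroup G), h = c * x) :
    ∀ b ∈ B, g * b = b * g :=
  stmt_16_general p hp P B hBP hBZ g hg hg' hfus
end

section
/- Let G be the semidirect product of the quaternion group Q₈ with a cyclic group of order 3 acting by cyclically permuting i, j, k (so G ≅ SL(2,3)). Then the unique subgroup of G of exponent 2 is the center {1, -1}, the Sylow 2-subgroup Q₈ controls fusion of cyclic subgroups of order 2 in G, but G is not 2-nilpotent. -/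
/-!
In `SL(2, F)` with `2 ≠ 0`, an element with `x ^ 2 = 1` equals its inverse, which is its adjugate;
comparing entries shows that `x` is scalar, so the solutions of `x ^ 2 = 1` are exactly the central
elements `±1`. Hence every nontrivial subgroup of exponent `2`, in particular every subgroup of
order `2`, is the centre `{±1}`. Being a normal `2`-subgroup, the centre lies in every Sylow
`2`-subgroup, and conjugation fixes it pointwise, so fusion control is trivial.

If `N` were a normal `2`-complement of a Sylow `2`-subgroup `P` of `SL(2, 3)`, then the quotient by
`N` would be a `2`-group, so `N` would contain every element of order `3`. The transvections
`!![1, 1; 0, 1]` and `!![1, 0; 1, 1]` have order `3` and their product has trace `0`, so it squares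
to `-1`; thus `-1 ∈ N`, and `|N|` would be even.
-/

open MatrixGroups

theorem IsPGroup.quotient_of_sup_eq_top {G : Type*} [Group G] {p : ℕ} {P N : Subgroup G}
    [N.Normal] (hP : IsPGroup p P) (hNP : N ⊔ P = ⊤) : IsPGroup p (G ⧸ N) := by
  refine hP.of_surjective ((QuotientGroup.mk' N).comp P.subtype) ?_
  intro y
  obtain ⟨g, rfl⟩ := QuotientGroup.mk_surjective y
  obtain ⟨n, hn, q, hq, rfl⟩ := Subgroup.mem_sup_of_normal_left.mp (hNP ▸ Subgroup.mem_top g)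
  exact ⟨⟨q, hq⟩, by simp [(QuotientGroup.eq_one_iff n).mpr hn]⟩

theorem Subgroup.mem_of_pow_eq_one_of_sup_eq_top {G : Type*} [Group G] {p : ℕ} {P N : Subgroup G}
    [N.Normal] (hP : IsPGroup p P) (hNP : N ⊔ P = ⊤) {n : ℕ} (hn : p.Coprime n) {x : G}
    (hx : x ^ n = 1) : x ∈ N := by
  have hx' : (x : G ⧸ N) ^ n = 1 := by rw [← QuotientGroup.mk_pow, hx, QuotientGroup.mk_one]
  have hord : orderOf (x : G ⧸ N) = 1 :=
    Nat.Coprime.eq_one_of_dvd ((hP.quotient_of_sup_eq_top hNP).orderOf_coprime hn _)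
      (orderOf_dvd_of_pow_eq_one hx')
  rwa [orderOf_eq_one_iff, QuotientGroup.eq_one_iff] at hord

namespace Matrix.SpecialLinearGroup
variable {F : Type*} [Field F]

theorem mem_center_iff_eq_one_or_eq_neg_one {x : SL(2, F)} :
    x ∈ Subgroup.center SL(2, F) ↔ x = 1 ∨ x = -1 := by
  rw [mem_center_iff, Fintype.card_fin]
  constructor
  · rintro ⟨r, hr, hx⟩
    rcases (mul_self_eq_one_iff (a := r)).mp (by rwa [← sq]) with rfl | rfl
    · exact Or.inl (Subtype.ext (by rw [← hx, map_one, coe_one]))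
    · exact Or.inr (Subtype.ext (by rw [← hx, map_neg, map_one, coe_neg, coe_one]))
  · rintro (rfl | rfl)
    · exact ⟨1, one_pow 2, by rw [map_one, coe_one]⟩
    · exact ⟨-1, by norm_num, by rw [map_neg, map_one, coe_neg, coe_one]⟩

theorem sq_eq_one_iff_mem_center (h2 : (2 : F) ≠ 0) {x : SL(2, F)} :
    x ^ 2 = 1 ↔ x ∈ Subgroup.center SL(2, F) := by
  refine ⟨fun hx => ?_, fun hx => ?_⟩
  · have hinv : x⁻¹ = x := by rw [inv_eq_iff_mul_eq_one, ← sq, hx]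
    have h := congrArg (fun y : SL(2, F) => (y : Matrix (Fin 2) (Fin 2) F)) hinv
    simp only [SL2_inv_expl] at h
    have hd : x 1 1 = x 0 0 := congrFun (congrFun h 0) 0
    have eq_zero_of_neg_eq (a : F) (ha : -a = a) : a = 0 :=
      (mul_eq_zero.mp (by linear_combination -ha : (2 : F) * a = 0)).resolve_left h2
    have hb : x 0 1 = 0 := eq_zero_of_neg_eq _ (congrFun (congrFun h 0) 1)
    have hc : x 1 0 = 0 := eq_zero_of_neg_eq _ (congrFun (congrFun h 1) 0)
    have hdet := x.2
    rw [det_fin_two, hb, hc, hd] at hdet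
    refine mem_center_iff.mpr ⟨x 0 0, by simpa [sq] using hdet, ?_⟩
    ext i j
    fin_cases i <;> fin_cases j <;> simp [hb, hc, hd]
  · rcases mem_center_iff_eq_one_or_eq_neg_one.mp hx with rfl | rfl <;> simp

theorem card_center_eq_two (h2 : (2 : F) ≠ 0) : Nat.card (Subgroup.center SL(2, F)) = 2 := by
  have hne : (1 : SL(2, F)) ≠ -1 := fun h => h2 <| by
    have := congrArg (fun y : SL(2, F) => (y : Matrix (Fin 2) (Fin 2) F) 0 0) h
    simp only [coe_one, coe_neg, one_apply_eq, neg_apply] at this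
    linear_combination this
  have hset : (Subgroup.center SL(2, F) : Set SL(2, F)) = {1, -1} := by
    ext x; exact mem_center_iff_eq_one_or_eq_neg_one
  calc Nat.card (Subgroup.center SL(2, F))
      = (Subgroup.center SL(2, F) : Set SL(2, F)).ncard := Nat.card_coe_set_eq _
    _ = 2 := by rw [hset, Set.ncard_pair hne]

theorem eq_center_of_forall_sq_eq_one (h2 : (2 : F) ≠ 0) {A : Subgroup SL(2, F)} (hA : A ≠ ⊥)
    (hsq : ∀ a ∈ A, a ^ 2 = 1) : A = Subgroup.center SL(2, F) := by
  refine le_antisymm (fun a ha => (sq_eq_one_iff_mem_center h2).mp (hsq a ha)) fun z hz => ?_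
  obtain ⟨a, ha, ha1⟩ := A.bot_or_exists_ne_one.resolve_left hA
  have ha' : a = -1 := (mem_center_iff_eq_one_or_eq_neg_one.mp
    ((sq_eq_one_iff_mem_center h2).mp (hsq a ha))).resolve_left ha1
  rcases mem_center_iff_eq_one_or_eq_neg_one.mp hz with rfl | rfl
  · exact A.one_mem
  · exact ha' ▸ ha

theorem eq_center_of_card_eq_two (h2 : (2 : F) ≠ 0) {A : Subgroup SL(2, F)}
    (hA : Nat.card A = 2) : A = Subgroup.center SL(2, F) :=
  eq_center_of_forall_sq_eq_one h2 (fun h => by simp [h] at hA)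
    fun a ha => orderOf_dvd_iff_pow_eq_one.mp (by simpa [hA] using A.orderOf_dvd_natCard ha)

theorem SL2_ZMod3_exists_pow_three_eq_one_mul_sq_eq_neg_one :
    ∃ u v : SL(2, ZMod 3), u ^ 3 = 1 ∧ v ^ 3 = 1 ∧ (u * v) ^ 2 = -1 :=
  ⟨⟨!![1, 1; 0, 1], by decide⟩, ⟨!![1, 0; 1, 1], by decide⟩, by decide⟩

theorem SL2_ZMod3_not_exists_normal_complement_of_isPGroup_two {P : Subgroup SL(2, ZMod 3)}
    (hP : IsPGroup 2 P) :
    ¬ ∃ N : Subgroup SL(2, ZMod 3), N.Normal ∧ Nat.Coprime (Nat.card N) 2 ∧ N ⊔ P = ⊤ := by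
  rintro ⟨N, hN, hcop, hNP⟩
  obtain ⟨u, v, hu, hv, huv⟩ := SL2_ZMod3_exists_pow_three_eq_one_mul_sq_eq_neg_one
  have mem (x : SL(2, ZMod 3)) (hx : x ^ 3 = 1) : x ∈ N :=
    Subgroup.mem_of_pow_eq_one_of_sup_eq_top (n := 3) hP hNP (by norm_num) hx
  have hneg : (-1 : SL(2, ZMod 3)) ∈ N := by
    rw [← huv]; exact N.pow_mem (N.mul_mem (mem u hu) (mem v hv)) 2
  have horder : orderOf (-1 : SL(2, ZMod 3)) = 2 := orderOf_eq_prime neg_one_sq (by decide)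
  have h2N : 2 ∣ Nat.card N := (dvd_of_eq horder.symm).trans (N.orderOf_dvd_natCard hneg)
  exact absurd (hcop.symm.eq_one_of_dvd h2N) (by norm_num)

end Matrix.SpecialLinearGroup

open Matrix in
theorem stmt_17 (P : Sylow 2 (SpecialLinearGroup (Fin 2) (ZMod 3))) :
    (Nat.card (Subgroup.center (SpecialLinearGroup (Fin 2) (ZMod 3))) = 2 ∧
      ∀ a ∈ Subgroup.center (SpecialLinearGroup (Fin 2) (ZMod 3)), a ^ 2 = 1) ∧
    (∀ A : Subgroup (SpecialLinearGroup (Fin 2) (ZMod 3)), A ≠ ⊥ → (∀ a ∈ A, a ^ 2 = 1) →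
        A = Subgroup.center (SpecialLinearGroup (Fin 2) (ZMod 3))) ∧
    (∀ A : Subgroup (SpecialLinearGroup (Fin 2) (ZMod 3)), Nat.card A = 2 →
        ∃ g, ∀ a ∈ A, g⁻¹ * a * g ∈ (P : Subgroup _)) ∧
    (∀ A : Subgroup (SpecialLinearGroup (Fin 2) (ZMod 3)), A ≤ (P : Subgroup _) →
        Nat.card A = 2 → ∀ g, (∀ a ∈ A, g⁻¹ * a * g ∈ (P : Subgroup _)) →
        ∃ x ∈ (P : Subgroup _), ∀ a ∈ A, g⁻¹ * a * g = x⁻¹ * a * x) ∧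
    ¬ ∃ N : Subgroup (SpecialLinearGroup (Fin 2) (ZMod 3)),
        N.Normal ∧ Nat.Coprime (Nat.card N) 2 ∧ N ⊔ (P : Subgroup _) = ⊤ := by
  have h2 : (2 : ZMod 3) ≠ 0 := by decide
  have hcard := SpecialLinearGroup.card_center_eq_two h2
  have hcenter_le : Subgroup.center SL(2, ZMod 3) ≤ P :=
    (IsPGroup.of_card (hcard.trans (pow_one 2).symm)).le_sylow_of_normal P
  refine ⟨⟨hcard, fun a ha => (SpecialLinearGroup.sq_eq_one_iff_mem_center h2).mpr ha⟩,
    fun A hA hsq => SpecialLinearGroup.eq_center_of_forall_sq_eq_one h2 hA hsq,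
    fun A hA => ⟨1, fun a ha => ?_⟩, fun A _ hA g _ => ⟨1, P.one_mem, fun a ha => ?_⟩,
    SpecialLinearGroup.SL2_ZMod3_not_exists_normal_complement_of_isPGroup_two P.isPGroup'⟩
  all_goals rw [SpecialLinearGroup.eq_center_of_card_eq_two h2 hA] at ha
  · simpa using hcenter_le ha
  · rw [inv_one, one_mul, mul_one, mul_assoc, ← Subgroup.mem_center_iff.mp ha g, inv_mul_cancel_left]
end

section
/- Let G be a finite group, P a Sylow p-subgroup, and suppose all elements of P of order dividing p (dividing 4 when p = 2) lie in Z(P). If A is a cyclic subgroup of G of order p (or order 2 or 4 when p = 2) with A ≤ P and A ≤ P^{g⁻¹} for some g ∈ G, then both P and P^{g⁻¹} are contained in C_G(A), and hence there exists c ∈ C_G(A) with P = P^{g⁻¹c}. -/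
/-!
Every element `a ∈ A` satisfies `a ^ n = 1` for `n = 4` (if `p = 2`) or `n = p`, since `|A|`
divides `n`. Such elements of `P` are central in `P`, so `P` centralises `A`; conjugating by `g`,
the elements `g⁻¹ a g ∈ P` are central in `P` as well, so `P^{g⁻¹} = g P g⁻¹` centralises `A`.
Both are then Sylow `p`-subgroups of `C_G(A)`, hence conjugate in `C_G(A)`.
-/

open Subgroup

section Centralizer

variable {G : Type*} [Group G] {H A : Subgroup G} {n : ℕ}

theorem Subgroup.le_centralizer_of_pow_eq_one
    (hcen : ∀ x ∈ H, x ^ n = 1 → ∀ y ∈ H, x * y = y * x)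
    (hexp : ∀ a ∈ A, a ^ n = 1) (hAH : A ≤ H) :
    H ≤ centralizer (A : Set G) :=
  fun y hy a ha => hcen a (hAH ha) (hexp a ha) y hy

theorem Subgroup.map_conj_le_centralizer_of_pow_eq_one
    (hcen : ∀ x ∈ H, x ^ n = 1 → ∀ y ∈ H, x * y = y * x)
    (hexp : ∀ a ∈ A, a ^ n = 1) (g : G) (hAH : ∀ a ∈ A, g⁻¹ * a * g ∈ H) :
    H.map (MulAut.conj g).toMonoidHom ≤ centralizer (A : Set G) := by
  rintro _ ⟨y, hy, rfl⟩ a ha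
  have hpow : (g⁻¹ * a * g) ^ n = 1 := by
    simpa [hexp a ha] using (map_pow (MulAut.conj g⁻¹) a n).symm
  have hc : Commute (g⁻¹ * a * g) y := hcen _ (hAH a ha) hpow y hy
  simpa [mul_assoc] using (hc.map (MulAut.conj g)).eq

end Centralizer

theorem Sylow.exists_mem_smul_eq_of_le {p : ℕ} [Fact p.Prime] {G : Type*} [Group G] [Finite G]
    {H : Subgroup G} {P Q : Sylow p G} (hP : (P : Subgroup G) ≤ H) (hQ : (Q : Subgroup G) ≤ H) :
    ∃ c ∈ H, c • Q = P := by
  obtain ⟨c, hc⟩ := MulAction.exists_smul_eq H (Q.subtype hQ) (P.subtype hP)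
  rw [Sylow.smul_subtype] at hc
  exact ⟨c, c.2, Sylow.subtype_injective hc⟩

theorem stmt_18 {G : Type*} [Group G] [Finite G] (p : ℕ) (hp : p.Prime) (P : Sylow p G)
    (hcen : ∀ x ∈ (P : Subgroup G), x ^ (if p = 2 then 4 else p) = 1 →
      ∀ y ∈ (P : Subgroup G), x * y = y * x)
    (A : Subgroup G)
    (hA : (p ≠ 2 ∧ Nat.card A = p) ∨
      (p = 2 ∧ IsCyclic A ∧ (Nat.card A = 2 ∨ Nat.card A = 4)))
    (g : G) (hAP : A ≤ (P : Subgroup G)) (hAPg : ∀ a ∈ A, g⁻¹ * a * g ∈ (P : Subgroup G)) :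
    (P : Subgroup G) ≤ Subgroup.centralizer (A : Set G) ∧
    (P : Subgroup G).map (MulAut.conj g).toMonoidHom ≤ Subgroup.centralizer (A : Set G) ∧
    ∃ c ∈ Subgroup.centralizer (A : Set G),
      (P : Subgroup G).map (MulAut.conj (c⁻¹ * g)).toMonoidHom = (P : Subgroup G) := by
  have : Fact p.Prime := ⟨hp⟩
  have hcard : Nat.card A ∣ if p = 2 then 4 else p := by
    rcases hA with ⟨hp2, hA⟩ | ⟨hp2, -, hA | hA⟩ <;> simp [hp2, hA]
  have hexp : ∀ a ∈ A, a ^ (if p = 2 then 4 else p) = 1 := fun a ha =>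
    orderOf_dvd_iff_pow_eq_one.mp ((A.orderOf_dvd_natCard ha).trans hcard)
  have hP := le_centralizer_of_pow_eq_one hcen hexp hAP
  have hgP := map_conj_le_centralizer_of_pow_eq_one hcen hexp g hAPg
  obtain ⟨c, hc, hcP⟩ := Sylow.exists_mem_smul_eq_of_le (Q := g • P) hP hgP
  refine ⟨hP, hgP, c⁻¹, inv_mem hc, ?_⟩
  rw [inv_inv]
  exact congrArg ((↑) : Sylow p G → Subgroup G) ((mul_smul c g P).trans hcP)
end
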